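/- Let (R,w) = (K[X,Y,Z],(1,a,ab)) with integers a ≥ 2 and b ≥ 2. The ideal I = (X^{ab}, Y^b, X^{a+1}Y^{b−1}) is not lexifiable; in particular, the weighted polynomial ring (K[X,Y,Z],(1,a,ab)) is not Macaulay-Lex. -/

import Mathlib

open MvPolynomial

/-- The lexicographic order on exponents of monomials (`LexLT μ ν` means `X^μ < X^ν`),
for the variable order `X > Y > Z`. -/
def LexLT {n : ℕ} (μ ν : Fin n →₀ ℕ) : Prop :=
  ∃ k, μ k < ν k ∧ ∀ s, s < k → μ s = ν s

/-- The degree-`i` component of the ideal `I` is spanned, as a `K`-vector space, by a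
lexsegment. -/
def LexSegComponent {K : Type*} [Field K] {n : ℕ} (w : Fin n → ℕ)
    (I : Ideal (MvPolynomial (Fin n) K)) (i : ℕ) : Prop :=
  ∃ L : Set (Fin n →₀ ℕ),
    (∀ μ ∈ L, Finsupp.weight w μ = i) ∧
    (∀ μ ∈ L, ∀ ν : Fin n →₀ ℕ, Finsupp.weight w ν = i → LexLT μ ν → ν ∈ L) ∧
    (∀ f : MvPolynomial (Fin n) K,
      (f ∈ I ∧ f.IsWeightedHomogeneous w i) ↔
        f ∈ Submodule.span K
          ((fun μ => (monomial μ (1 : K) : MvPolynomial (Fin n) K)) '' L))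

/-- An ideal is lexicographic if each of its graded components is spanned by a
lexsegment. -/
def IsLexIdeal {K : Type*} [Field K] {n : ℕ} (w : Fin n → ℕ)
    (I : Ideal (MvPolynomial (Fin n) K)) : Prop :=
  ∀ i : ℕ, LexSegComponent w I i

/-- The Hilbert function of the ideal `I`: `H_I(t) = dim_K I_t`, the `K`-dimension of the
space of weighted homogeneous elements of degree `t` of `I`. -/
noncomputable def hilbertIdeal {K : Type*} [Field K] {n : ℕ} (w : Fin n → ℕ)
    (I : Ideal (MvPolynomial (Fin n) K)) (t : ℕ) : ℕ :=
  Module.finrank K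
    (Submodule.restrictScalars K I ⊓ weightedHomogeneousSubmodule K w t :
      Submodule K (MvPolynomial (Fin n) K))

/-- `I` is lexifiable: there is a lexicographic ideal with the same Hilbert function. -/
def Lexifiable {K : Type*} [Field K] {n : ℕ} (w : Fin n → ℕ)
    (I : Ideal (MvPolynomial (Fin n) K)) : Prop :=
  ∃ L : Ideal (MvPolynomial (Fin n) K),
    IsLexIdeal w L ∧ ∀ t : ℕ, hilbertIdeal w L t = hilbertIdeal w I t

/-!
Put `t = a(2b-2)+1`. In degree `t` the ideal `I` contains the `2b-1` monomials
`X^{a(2b-2-j)+1} Y^j`, `j < 2b-1`, while in degree `t+a` every monomial of `I` is free of `Z`, so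
`H_I(t+a) ≤ 2b`. Let `L` be a lex ideal with `H_L = H_I` and `S` its lexsegment in degree `t`.
Only `b` monomials of degree `t` have `X`-exponent above `a(b-2)+1`, so some `μ ∈ S` has
`X`-exponent at most `a(b-2)+1`. The lexsegment of `L` in degree `t+a` then contains `Y·S`
together with the `Y`-free monomials `X^{a(2b-1)+1}` and `X^{a(b-1)+1} Z`, which are lex-larger
than `Yμ`: at least `2b+1` monomials, a contradiction.
-/

namespace MvPolynomial

variable {σ R : Type*} [CommSemiring R]

theorem weightedHomogeneousComponent_mem_ideal_span_monomial {M : Type*} [AddCommMonoid M]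
    (w : σ → M) {G : Set (σ →₀ ℕ)} {f : MvPolynomial σ R}
    (hf : f ∈ Ideal.span ((fun g => monomial g (1 : R)) '' G)) (m : M) :
    weightedHomogeneousComponent w m f ∈ Ideal.span ((fun g => monomial g (1 : R)) '' G) := by
  classical
  rw [mem_ideal_span_monomial_image] at hf ⊢
  intro d hd
  rw [support_weightedHomogeneousComponent, Finset.mem_filter] at hd
  exact hf d hd.1

theorem restrictScalars_ideal_span_monomial_inf_weightedHomogeneousSubmodule
    {M : Type*} [AddCommMonoid M] (w : σ → M) (G : Set (σ →₀ ℕ)) (m : M) :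
    (Ideal.span ((fun g => monomial g (1 : R)) '' G)).restrictScalars R ⊓
        weightedHomogeneousSubmodule R w m =
      restrictSupport R {d | Finsupp.weight w d = m ∧ ∃ g ∈ G, g ≤ d} := by
  ext f
  rw [Submodule.mem_inf, Submodule.restrictScalars_mem, mem_ideal_span_monomial_image,
    weightedHomogeneousSubmodule_eq_finsupp_supported, ← restrictSupport, mem_restrictSupport_iff,
    mem_restrictSupport_iff]
  simp only [Set.subset_def, Finset.mem_coe, Set.mem_ofPred_eq]
  exact and_comm.trans forall₂_and.symm

end MvPolynomial

section HilbertFunction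

variable {K : Type*} [Field K] {n : ℕ}

theorem hilbertIdeal_span_monomial (w : Fin n → ℕ) (G : Set (Fin n →₀ ℕ)) (t : ℕ) :
    hilbertIdeal w (Ideal.span ((fun g => monomial g (1 : K)) '' G)) t =
      {d | Finsupp.weight w d = t ∧ ∃ g ∈ G, g ≤ d}.ncard := by
  rw [hilbertIdeal, restrictScalars_ideal_span_monomial_inf_weightedHomogeneousSubmodule,
    Module.finrank_eq_nat_card_basis (basisRestrictSupport K _), Nat.card_coe_set_eq]

variable {w : Fin n → ℕ} {I : Ideal (MvPolynomial (Fin n) K)} {t : ℕ} {S : Set (Fin n →₀ ℕ)}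

theorem hilbertIdeal_eq_ncard_of_span_monomial
    (hS : ∀ f : MvPolynomial (Fin n) K, (f ∈ I ∧ f.IsWeightedHomogeneous w t) ↔
      f ∈ Submodule.span K ((fun μ => monomial μ (1 : K)) '' S)) :
    hilbertIdeal w I t = S.ncard := by
  have : I.restrictScalars K ⊓ weightedHomogeneousSubmodule K w t = restrictSupport K S := by
    ext f
    rw [restrictSupport_eq_span, ← hS]
    rfl
  rw [hilbertIdeal, this, Module.finrank_eq_nat_card_basis (basisRestrictSupport K _),
    Nat.card_coe_set_eq]

theorem monomial_mem_of_mem_span_monomial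
    (hS : ∀ f : MvPolynomial (Fin n) K, (f ∈ I ∧ f.IsWeightedHomogeneous w t) ↔
      f ∈ Submodule.span K ((fun μ => monomial μ (1 : K)) '' S))
    {μ : Fin n →₀ ℕ} (hμ : μ ∈ S) :
    monomial μ (1 : K) ∈ I :=
  ((hS _).mpr (Submodule.subset_span ⟨μ, hμ, rfl⟩)).1

theorem mem_of_monomial_mem_span_monomial
    (hS : ∀ f : MvPolynomial (Fin n) K, (f ∈ I ∧ f.IsWeightedHomogeneous w t) ↔
      f ∈ Submodule.span K ((fun μ => monomial μ (1 : K)) '' S))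
    {μ : Fin n →₀ ℕ} (hμ : monomial μ (1 : K) ∈ I) (hμw : Finsupp.weight w μ = t) : μ ∈ S := by
  have := (hS _).mp ⟨hμ, isWeightedHomogeneous_monomial _ _ _ hμw⟩
  rw [← restrictSupport_eq_span, monomial_mem_restrictSupport] at this
  exact this.resolve_right one_ne_zero

end HilbertFunction

theorem lexLT_of_apply_zero_lt {n : ℕ} {μ ν : Fin (n + 1) →₀ ℕ} (h : μ 0 < ν 0) : LexLT μ ν :=
  ⟨0, h, fun s hs => absurd hs (Fin.not_lt_zero s)⟩

namespace OneAAb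

def generatorExponents (a b : ℕ) : Set (Fin 3 →₀ ℕ) :=
  {Finsupp.single 0 (a * b), Finsupp.single 1 b,
    Finsupp.single 0 (a + 1) + Finsupp.single 1 (b - 1)}

noncomputable def ideal (K : Type*) [Field K] (a b : ℕ) : Ideal (MvPolynomial (Fin 3) K) :=
  Ideal.span ((fun g => monomial g (1 : K)) '' generatorExponents a b)

variable {a b : ℕ}

theorem exists_generatorExponents_le_iff {ν : Fin 3 →₀ ℕ} :
    (∃ g ∈ generatorExponents a b, g ≤ ν) ↔
      a * b ≤ ν 0 ∨ b ≤ ν 1 ∨ (a + 1 ≤ ν 0 ∧ b - 1 ≤ ν 1) := by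
  simp [generatorExponents, Finsupp.le_def, Fin.forall_fin_succ]

theorem weight_eq (ν : Fin 3 →₀ ℕ) :
    Finsupp.weight ![1, a, a * b] ν = ν 0 + a * (ν 1 + b * ν 2) := by
  simp [Finsupp.weight_apply, Finsupp.sum_fintype, Fin.sum_univ_three]
  ring

theorem finite_setOf_weight_eq (ha : 1 ≤ a) (hb : 1 ≤ b) (d : ℕ) :
    {ν : Fin 3 →₀ ℕ | Finsupp.weight ![1, a, a * b] ν = d}.Finite :=
  Finsupp.finite_of_nat_weight_eq _ (fun i => by fin_cases i <;> simp <;> omega) d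

theorem ncard_le_of_apply_two_eq_zero {d m : ℕ} {T : Set (Fin 3 →₀ ℕ)}
    (hT : ∀ ν ∈ T, Finsupp.weight ![1, a, a * b] ν = d ∧ ν 2 = 0 ∧ ν 1 < m) :
    T.ncard ≤ m := by
  refine (Set.ncard_le_ncard_of_injOn (· 1) (fun ν hν => (hT ν hν).2.2) ?_).trans
    (Set.ncard_Iio_nat m).le
  intro μ hμ ν hν h1
  obtain ⟨hμw, hμ2, -⟩ := hT μ hμ
  obtain ⟨hνw, hν2, -⟩ := hT ν hν
  simp only at h1
  rw [weight_eq, hμ2, h1] at hμw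
  rw [weight_eq, hν2] at hνw
  ext i
  fin_cases i
  · simp only [Fin.zero_eta]; omega
  · exact h1
  · simp only [Fin.reduceFinMk]; omega

theorem apply_two_eq_zero_of_weight_eq_low (hb : 2 ≤ b) {ν : Fin 3 →₀ ℕ}
    (hν : Finsupp.weight ![1, a, a * b] ν = a * (2 * b - 2) + 1) (h0 : a * (b - 2) + 1 < ν 0) :
    ν 2 = 0 ∧ ν 1 < b := by
  rw [weight_eq] at hν
  obtain ⟨c, rfl⟩ : ∃ c, b = c + 2 := ⟨b - 2, by omega⟩
  rw [show 2 * (c + 2) - 2 = 2 * c + 2 by omega] at hν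
  rw [Nat.add_sub_cancel] at h0
  have : ν 1 + (c + 2) * ν 2 < c + 2 := by nlinarith
  constructor <;> nlinarith

theorem apply_two_eq_zero_of_weight_eq_high (ha : 2 ≤ a) (hb : 2 ≤ b) {ν : Fin 3 →₀ ℕ}
    (hν : Finsupp.weight ![1, a, a * b] ν = a * (2 * b - 1) + 1)
    (hI : ∃ g ∈ generatorExponents a b, g ≤ ν) : ν 2 = 0 ∧ ν 1 < 2 * b := by
  rw [weight_eq] at hν
  rw [exists_generatorExponents_le_iff] at hI
  obtain ⟨c, rfl⟩ : ∃ c, b = c + 2 := ⟨b - 2, by omega⟩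
  rw [show 2 * (c + 2) - 1 = 2 * c + 3 by omega] at hν
  rw [show c + 2 - 1 = c + 1 by omega] at hI
  have hs : ν 1 + (c + 2) * ν 2 ≤ 2 * c + 3 := by nlinarith
  have hz0 : ν 2 = 0 := by
    have hz : ν 2 ≤ 1 := by nlinarith
    by_contra h
    rw [show ν 2 = 1 by omega] at hν hs
    rcases hI with h | h | ⟨h, h'⟩ <;> nlinarith
  rw [hz0] at hs
  exact ⟨hz0, by omega⟩

theorem two_mul_sub_one_le_hilbertIdeal (K : Type*) [Field K] (ha : 1 ≤ a) (hb : 2 ≤ b) :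
    2 * b - 1 ≤ hilbertIdeal ![1, a, a * b] (ideal K a b) (a * (2 * b - 2) + 1) := by
  rw [ideal, hilbertIdeal_span_monomial]
  let f : ℕ → Fin 3 →₀ ℕ := fun j =>
    Finsupp.single 0 (a * (2 * b - 2 - j) + 1) + Finsupp.single 1 j
  have hf : f.Injective := fun i j h => by simpa [f] using congrArg (· 1) h
  calc 2 * b - 1 = (f '' Set.Iio (2 * b - 1)).ncard := by
        rw [Set.ncard_image_of_injective _ hf, Set.ncard_Iio_nat]
    _ ≤ _ := by
      refine Set.ncard_le_ncard ?_ ((finite_setOf_weight_eq ha (by omega) _).subset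
        fun ν hν => hν.1)
      rintro _ ⟨j, hj, rfl⟩
      simp only [Set.mem_Iio] at hj
      refine ⟨?_, exists_generatorExponents_le_iff.mpr ?_⟩
      · simp only [f, weight_eq, Finsupp.add_apply, Finsupp.single_apply]
        simp only [Fin.reduceEq, if_true, if_false, zero_add, add_zero, mul_zero]
        rw [add_right_comm, ← mul_add, Nat.sub_add_cancel (by omega)]
      · simp only [f, Finsupp.add_apply, Finsupp.single_apply]
        simp only [Fin.reduceEq, if_true, if_false, zero_add, add_zero]
        rcases lt_trichotomy (j + 1) b with hj' | hj' | hj'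
        · exact Or.inl (le_add_right (Nat.mul_le_mul_left a (by omega)))
        · exact Or.inr (Or.inr ⟨Nat.succ_le_succ (Nat.le_mul_of_pos_right a (by omega)), by omega⟩)
        · exact Or.inr (Or.inl (by omega))

theorem hilbertIdeal_le_two_mul (K : Type*) [Field K] (ha : 2 ≤ a) (hb : 2 ≤ b) :
    hilbertIdeal ![1, a, a * b] (ideal K a b) (a * (2 * b - 1) + 1) ≤ 2 * b := by
  rw [ideal, hilbertIdeal_span_monomial]
  exact ncard_le_of_apply_two_eq_zero fun _ hν =>
    ⟨hν.1, apply_two_eq_zero_of_weight_eq_high ha hb hν.1 hν.2⟩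

theorem exists_mem_apply_zero_le (hb : 2 ≤ b) {S : Set (Fin 3 →₀ ℕ)}
    (hSw : ∀ ν ∈ S, Finsupp.weight ![1, a, a * b] ν = a * (2 * b - 2) + 1)
    (hS : 2 * b - 1 ≤ S.ncard) : ∃ ν ∈ S, ν 0 ≤ a * (b - 2) + 1 := by
  by_contra! h
  have := ncard_le_of_apply_two_eq_zero fun ν hν =>
    ⟨hSw ν hν, apply_two_eq_zero_of_weight_eq_low hb (hSw ν hν) (h ν hν)⟩
  omega

theorem ncard_add_two_le_of_lexSegment (ha : 1 ≤ a) (hb : 2 ≤ b) {S S' : Set (Fin 3 →₀ ℕ)}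
    (hS' : S'.Finite)
    (hS'lex : ∀ μ ∈ S', ∀ ν, Finsupp.weight ![1, a, a * b] ν = a * (2 * b - 1) + 1 →
      LexLT μ ν → ν ∈ S')
    (hYS : ∀ μ ∈ S, μ + Finsupp.single 1 1 ∈ S') {ν : Fin 3 →₀ ℕ} (hν : ν ∈ S)
    (hν0 : ν 0 ≤ a * (b - 2) + 1) :
    S.ncard + 2 ≤ S'.ncard := by
  set p : Fin 3 →₀ ℕ := Finsupp.single 0 (a * (2 * b - 1) + 1)
  set q : Fin 3 →₀ ℕ := Finsupp.single 0 (a * (b - 1) + 1) + Finsupp.single 2 1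
  have hν0' : a * (b - 2) + 1 ≤ a * (b - 1) := by
    rw [show b - 1 = b - 2 + 1 by omega, mul_add_one]
    omega
  have hp : p ∈ S' := by
    refine hS'lex _ (hYS ν hν) p (by simp [p, weight_eq]) (lexLT_of_apply_zero_lt ?_)
    simpa [p] using hν0.trans (hν0'.trans (Nat.mul_le_mul_left a (by omega)))
  have hq : q ∈ S' := by
    refine hS'lex _ (hYS ν hν) q ?_ (lexLT_of_apply_zero_lt ?_)
    · have : a * (b - 1) + a * b = a * (2 * b - 1) := by
        rw [← mul_add, show b - 1 + b = 2 * b - 1 by omega]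
      simp [q, weight_eq, add_right_comm, this]
    · simpa [q] using hν0.trans hν0'
  have hYS' : (· + Finsupp.single 1 1) '' S ⊆ S' := Set.image_subset_iff.mpr hYS
  have hpY : p ∉ (· + Finsupp.single 1 1) '' S := by
    rintro ⟨μ, -, h⟩
    simpa [p] using congrArg (· 1) h
  have hqY : q ∉ (· + Finsupp.single 1 1) '' S := by
    rintro ⟨μ, -, h⟩
    simpa [q] using congrArg (· 1) h
  have hpq : p ∉ insert q ((· + Finsupp.single 1 1) '' S) := by
    rintro (h | h)
    · simpa [p, q] using congrArg (· 2) h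
    · exact hpY h
  calc S.ncard + 2 = (insert p (insert q ((· + Finsupp.single 1 1) '' S))).ncard := by
        rw [Set.ncard_insert_of_notMem hpq (hS'.subset (Set.insert_subset hq hYS')),
          Set.ncard_insert_of_notMem hqY (hS'.subset hYS'),
          Set.ncard_image_of_injective _ (add_left_injective _)]
    _ ≤ S'.ncard := Set.ncard_le_ncard (Set.insert_subset hp (Set.insert_subset hq hYS')) hS'

theorem not_lexifiable (K : Type*) [Field K] (ha : 2 ≤ a) (hb : 2 ≤ b) :
    ¬ Lexifiable ![1, a, a * b] (ideal K a b) := by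
  rintro ⟨L, hL, hH⟩
  obtain ⟨S, hSw, -, hS⟩ := hL (a * (2 * b - 2) + 1)
  obtain ⟨S', hS'w, hS'lex, hS'⟩ := hL (a * (2 * b - 1) + 1)
  have hSc : 2 * b - 1 ≤ S.ncard := by
    rw [← hilbertIdeal_eq_ncard_of_span_monomial hS, hH]
    exact two_mul_sub_one_le_hilbertIdeal K (by omega) hb
  have hS'c : S'.ncard ≤ 2 * b := by
    rw [← hilbertIdeal_eq_ncard_of_span_monomial hS', hH]
    exact hilbertIdeal_le_two_mul K ha hb
  obtain ⟨ν, hν, hν0⟩ := exists_mem_apply_zero_le hb hSw hSc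
  have hYS : ∀ μ ∈ S, μ + Finsupp.single 1 1 ∈ S' := by
    intro μ hμ
    refine mem_of_monomial_mem_span_monomial hS' ?_ ?_
    · rw [← mul_one (1 : K), ← monomial_mul]
      exact L.mul_mem_right _ (monomial_mem_of_mem_span_monomial hS hμ)
    · rw [map_add, hSw μ hμ, Finsupp.weight_single, show 2 * b - 1 = 2 * b - 2 + 1 by omega]
      simp only [Matrix.cons_val_one, Matrix.cons_val_zero, smul_eq_mul, one_mul]
      ring
  have hS'fin : S'.Finite := (finite_setOf_weight_eq (by omega) (by omega) _).subset hS'w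
  have := ncard_add_two_le_of_lexSegment (by omega) hb hS'fin hS'lex hYS hν hν0
  omega

end OneAAb

theorem one_a_ab_not_macaulay_lex_general
    (K : Type*) [Field K]
    (a b : ℕ) (ha : 2 ≤ a) (hb : 2 ≤ b) :
    ¬ Lexifiable ![1, a, a * b]
        (Ideal.span
          {(monomial (Finsupp.single 0 (a * b)) (1 : K) : MvPolynomial (Fin 3) K),
           monomial (Finsupp.single 1 b) 1,
           monomial (Finsupp.single 0 (a + 1) + Finsupp.single 1 (b - 1)) 1})
    ∧
    ¬ (∀ J : Ideal (MvPolynomial (Fin 3) K),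
        (∀ f ∈ J, ∀ e : ℕ, weightedHomogeneousComponent ![1, a, a * b] e f ∈ J) →
        Lexifiable ![1, a, a * b] J) := by
  have hI : Ideal.span {monomial (Finsupp.single 0 (a * b)) (1 : K),
      monomial (Finsupp.single 1 b) 1,
      monomial (Finsupp.single 0 (a + 1) + Finsupp.single 1 (b - 1)) 1} = OneAAb.ideal K a b := by
    simp [OneAAb.ideal, OneAAb.generatorExponents, Set.image_insert_eq]
  rw [hI]
  exact ⟨OneAAb.not_lexifiable K ha hb, fun h => OneAAb.not_lexifiable K ha hb
    (h _ fun _ hf e => weightedHomogeneousComponent_mem_ideal_span_monomial _ hf e)⟩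

/-- **`(K[X,Y,Z],(1,a,ab))` is not Macaulay-Lex.**
Let `R = K[X,Y,Z]` with `deg X = 1`, `deg Y = a`, `deg Z = a·b` (`a, b ≥ 2`), over an
infinite field of characteristic `0`.  The ideal `I = (X^{ab}, Y^b, X^{a+1} Y^{b-1})` is
not lexifiable; in particular `R` is not Macaulay-Lex. -/
theorem one_a_ab_not_macaulay_lex
    (K : Type*) [Field K] [CharZero K]
    (a b : ℕ) (ha : 2 ≤ a) (hb : 2 ≤ b) :
    ¬ Lexifiable ![1, a, a * b]
        (Ideal.span
          {(monomial (Finsupp.single 0 (a * b)) (1 : K) : MvPolynomial (Fin 3) K),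
           monomial (Finsupp.single 1 b) 1,
           monomial (Finsupp.single 0 (a + 1) + Finsupp.single 1 (b - 1)) 1})
    ∧
    ¬ (∀ J : Ideal (MvPolynomial (Fin 3) K),
        (∀ f ∈ J, ∀ e : ℕ, weightedHomogeneousComponent ![1, a, a * b] e f ∈ J) →
        Lexifiable ![1, a, a * b] J) :=
  one_a_ab_not_macaulay_lex_general K a b ha hb
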